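/- Genus 2 commutation relation: with the same definitions, [L_2, L_6] = (2/5)(2λ₈ L_0 − 2λ₄ L_4). -/

import Mathlib

open MvPolynomial

/-- Variables: `X 0 = λ₄`, `X 1 = λ₆`, `X 2 = λ₈`, `X 3 = λ₁₀`. -/
noncomputable abbrev l4 : MvPolynomial (Fin 4) ℚ := X 0
noncomputable abbrev l6 : MvPolynomial (Fin 4) ℚ := X 1
noncomputable abbrev l8 : MvPolynomial (Fin 4) ℚ := X 2
noncomputable abbrev l10 : MvPolynomial (Fin 4) ℚ := X 3

/-- The genus-2 matrix `T = (T_{2k+2,2s−2})`, rows and columns indexed by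
`0,1,2,3 ↔ λ₄,λ₆,λ₈,λ₁₀`. -/
noncomputable def T2 : Matrix (Fin 4) (Fin 4) (MvPolynomial (Fin 4) ℚ) :=
  ![![4 * l4, 6 * l6, 8 * l8, 10 * l10],
    ![6 * l6, 8 * l8 - C (12/5 : ℚ) * l4 ^ 2, 10 * l10 - C (8/5 : ℚ) * l4 * l6,
      - (C (4/5 : ℚ) * l4 * l8)],
    ![8 * l8, 10 * l10 - C (8/5 : ℚ) * l4 * l6, 4 * l4 * l8 - C (12/5 : ℚ) * l6 ^ 2,
      6 * l4 * l10 - C (6/5 : ℚ) * l6 * l8],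
    ![10 * l10, - (C (4/5 : ℚ) * l4 * l8), 6 * l4 * l10 - C (6/5 : ℚ) * l6 * l8,
      4 * l6 * l10 - C (8/5 : ℚ) * l8 ^ 2]]

/-- The derivation `L_{2k} = Σ_s T_{2k+2,2s−2} ∂/∂λ_{2s}` of `ℚ[λ₄,λ₆,λ₈,λ₁₀]`;
`Lg2 k` is `L_{2k}`. -/
noncomputable def Lg2 (k : Fin 4) (p : MvPolynomial (Fin 4) ℚ) : MvPolynomial (Fin 4) ℚ :=
  ∑ j : Fin 4, T2 k j * pderiv j p

/-!
A derivation of a polynomial ring is determined by its values on the variables, and the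
commutator of the vector fields `Σ aⱼ ∂ⱼ` and `Σ bⱼ ∂ⱼ` is the vector field with coefficients
`D_a bⱼ − D_b aⱼ`. The bracket `[L₂, L₆]` is therefore the vector field with coefficients
`L₂ T_{10,2s−2} − L₆ T_{6,2s−2}`, and the theorem reduces to four polynomial identities between
entries of `T`.
-/

@[simp]
theorem Derivation.map_ofNat {R A M : Type*} [CommSemiring R] [CommSemiring A] [Algebra R A]
    [AddCommMonoid M] [Module A M] [Module R M] (D : Derivation R A M) (n : ℕ) [n.AtLeastTwo] :
    D (no_index (OfNat.ofNat n : A)) = 0 :=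
  D.map_natCast n

namespace MvPolynomial

variable {R σ : Type*}

theorem mkDerivation_apply_eq_sum_pderiv [CommSemiring R] [Fintype σ]
    (f : σ → MvPolynomial σ R) (p : MvPolynomial σ R) :
    mkDerivation R f p = ∑ i, f i * pderiv i p := by
  classical
  have hsum (q : MvPolynomial σ R) : (∑ i, f i • pderiv i) q = ∑ i, f i * pderiv i q := by
    have := congrFun (map_sum Derivation.coeFnAddMonoidHom (fun i => f i • pderiv i) .univ) q
    simpa only [Derivation.coeFnAddMonoidHom_apply, Finset.sum_apply, Derivation.smul_apply,
      smul_eq_mul] using this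
  have h : mkDerivation R f = ∑ i, f i • pderiv i :=
    derivation_ext fun j => by simp [hsum, mkDerivation_X, pderiv_X, Pi.single_apply]
  rw [h, hsum]

theorem lie_mkDerivation [CommRing R] (f g : σ → MvPolynomial σ R) :
    ⁅mkDerivation R f, mkDerivation R g⁆ =
      mkDerivation R fun i => mkDerivation R f (g i) - mkDerivation R g (f i) :=
  derivation_ext fun i => by simp [Derivation.commutator_apply, mkDerivation_X]

end MvPolynomial

theorem Lg2_eq_mkDerivation (k : Fin 4) : Lg2 k = mkDerivation ℚ (T2 k) :=
  funext fun p => (mkDerivation_apply_eq_sum_pderiv (T2 k) p).symm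

theorem bracket_L2_L6_coeff (i : Fin 4) :
    mkDerivation ℚ (T2 1) (T2 3 i) - mkDerivation ℚ (T2 3) (T2 1 i) =
      C (2/5 : ℚ) * (2 * l8 * T2 0 i - 2 * l4 * T2 2 i) := by
  fin_cases i <;>
    simp only [T2, Fin.isValue, Fin.zero_eta, Fin.mk_one, Fin.reduceFinMk, Matrix.cons_val_zero,
      Matrix.cons_val_one, Matrix.cons_val', Matrix.cons_val, Matrix.cons_val_fin_one, map_neg,
      map_sub, Derivation.leibniz, Derivation.leibniz_pow, Derivation.map_ofNat, derivation_C,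
      mkDerivation_X, smul_eq_mul, nsmul_eq_mul, Nat.add_one_sub_one, pow_one] <;>
    -- `algebra` combines the rational constants only when they are written `algebraMap ℚ _ q`
    simp only [← algebraMap_eq] <;>
    algebra

theorem genus2_bracket_L2_L6 (p : MvPolynomial (Fin 4) ℚ) :
    Lg2 1 (Lg2 3 p) - Lg2 3 (Lg2 1 p)
      = C (2/5 : ℚ) * (2 * l8 * Lg2 0 p - 2 * l4 * Lg2 2 p) := by
  simp only [Lg2_eq_mkDerivation]
  rw [← Derivation.commutator_apply, lie_mkDerivation]
  simp only [bracket_L2_L6_coeff]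
  simp only [mkDerivation_apply_eq_sum_pderiv, Fin.sum_univ_four]
  ring
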